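/- Let p > q be odd primes and let G be a finite group. If G embeds transitively in Hol(C_{2pq}), then G also embeds transitively in Hol(C_p × D_q), in Hol(C_q × D_p), and in Hol(D_{pq}), where C_{2pq} = Multiplicative (ZMod (2*p*q)), C_p × D_q = Multiplicative (ZMod p) × DihedralGroup q, C_q × D_p = Multiplicative (ZMod q) × DihedralGroup p, and D_{pq} = DihedralGroup (p*q). -/

import Mathlib

/-- The left regular representation of a group `N` in `Equiv.Perm N`. -/
def leftReg (N : Type*) [Group N] : N →* Equiv.Perm N :=
  MulAction.toPermHom N N

/-- The holomorph of `N`: the normalizer of the image of the left regular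
representation inside `Equiv.Perm N`. -/
def Hol (N : Type*) [Group N] : Subgroup (Equiv.Perm N) :=
  Subgroup.normalizer ((leftReg N).range : Set (Equiv.Perm N))

/-- A subgroup of `Equiv.Perm N` is transitive on `N`. -/
def IsTransitiveSubgroup {N : Type*} [Group N] (M : Subgroup (Equiv.Perm N)) : Prop :=
  ∀ a b : N, ∃ g ∈ M, g a = b

/-- A group `G` embeds transitively in `Hol(N)` if there is an injective
homomorphism `G →* Equiv.Perm N` whose range lies in `Hol(N)` and is
transitive on `N`. -/
def EmbedsTransitively (G : Type*) [Group G] (N : Type*) [Group N] : Prop :=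
  ∃ φ : G →* Equiv.Perm N, Function.Injective φ ∧ φ.range ≤ Hol N ∧
    IsTransitiveSubgroup φ.range

/-!
If `e : N₂ ≃ N₁` is a bijection such that every element of `Hol N₁` normalizes the image of the
left regular representation of `N₂` transported along `e`, then conjugation by `e` carries
`Hol N₁` into `Hol N₂`, so a transitive embedding `G → Hol N₁` yields one into `Hol N₂`.

Here `N₁ = C_{2pq}` is written as `A × C₂ × C_b` with `A` one of `C_p`, `C_q`, trivial and `b`
the remaining odd factor, and `N₂ = A × D_b`. Transported along `r i ↦ (0, i)`, `sr i ↦ (1, -i)`,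
the regular representation of `N₂` becomes `x ↦ d * x` for `d` of parity `0` and `x ↦ d * ι x`
for `d` of parity `1`, where `ι` inverts the `C₂ × C_b` factor. The holomorph of `N₁` is generated
by translations and automorphisms. Every automorphism of the cyclic group `N₁` is a power map
`x ↦ x ^ m` with `m` odd, so it commutes with `ι`, preserves parity, and hence normalizes this
subgroup; a translation is one of its elements, possibly followed by the automorphism `ι`.
-/

section Holomorph

variable {N : Type*} [Group N]

@[simp]
lemma leftReg_apply (n x : N) : leftReg N n x = n * x := rfl

@[simp]
lemma leftReg_symm_apply (n x : N) : (leftReg N n).symm x = n⁻¹ * x := rfl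

@[simp]
lemma MulAut.toPerm_apply (α : MulAut N) (x : N) : MulAut.toPerm N α x = α x := rfl

lemma map_mul_of_mem_Hol {g : Equiv.Perm N} (hg : g ∈ Hol N) (x y : N) :
    g (x * y) = g x * (g 1)⁻¹ * g y := by
  obtain ⟨d, hd⟩ := (Subgroup.mem_normalizer_iff.mp hg (leftReg N x)).mp ⟨x, rfl⟩
  have hconj : ∀ z, d * g z = g (x * z) := fun z => by
    simpa using congr($hd (g z))
  have hd' : d = g x * (g 1)⁻¹ := by rw [eq_mul_inv_iff_mul_eq, hconj, mul_one]
  rw [← hconj, hd']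

lemma Hol_le_range_leftReg_sup_range_toPerm :
    Hol N ≤ (leftReg N).range ⊔ (MulAut.toPerm N).range := by
  intro g hg
  let α : MulAut N :=
    MulEquiv.mk' (leftReg N (g 1)⁻¹ * g) fun x y => by
      simp [map_mul_of_mem_Hol hg, mul_assoc]
  have hg_eq : g = leftReg N (g 1) * MulAut.toPerm N α := by
    ext x; simp [α, MulEquiv.mk']
  rw [hg_eq]
  exact Subgroup.mul_mem_sup ⟨g 1, rfl⟩ ⟨α, rfl⟩

lemma MulAut.toPerm_mul_leftReg_mul_inv (α : MulAut N) (x : N) :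
    MulAut.toPerm N α * leftReg N x * (MulAut.toPerm N α)⁻¹ = leftReg N (α x) := by
  rw [mul_inv_eq_iff_eq_mul]
  ext y; simp

lemma MulAut.commute_of_isCyclic [IsCyclic N] (α β : MulAut N) : Commute α β :=
  (IsCyclic.mulAutMulEquiv N).injective (by rw [map_mul, map_mul, mul_comm])

end Holomorph

section Transfer

variable {G N₁ N₂ : Type*} [Group G] [Group N₁] [Group N₂]

theorem EmbedsTransitively.of_equiv (e : N₂ ≃ N₁)
    (hHol : Hol N₁ ≤ Subgroup.normalizer
      ((leftReg N₂).range.map e.permCongrHom.toMonoidHom : Set (Equiv.Perm N₁)))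
    (h : EmbedsTransitively G N₁) : EmbedsTransitively G N₂ := by
  obtain ⟨φ, hφ_inj, hφ_Hol, hφ_trans⟩ := h
  refine ⟨e.symm.permCongrHom.toMonoidHom.comp φ, e.symm.permCongrHom.injective.comp hφ_inj,
    ?_, ?_⟩
  · rintro _ ⟨g, rfl⟩
    have hg : φ g ∈ (Hol N₂).map e.permCongrHom.toMonoidHom := by
      rw [Hol, Subgroup.map_equiv_normalizer_eq]
      exact hHol (hφ_Hol ⟨g, rfl⟩)
    obtain ⟨σ, hσ, hσg⟩ := hg
    rw [MonoidHom.comp_apply, ← hσg]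
    exact (e.permCongrHom.symm_apply_apply σ).symm ▸ hσ
  · intro a b
    obtain ⟨_, ⟨g, rfl⟩, hg⟩ := hφ_trans (e a) (e b)
    exact ⟨_, ⟨g, rfl⟩, by simp [Equiv.permCongrHom, hg]⟩

theorem EmbedsTransitively.of_mulEquiv (e : N₁ ≃* N₂) (h : EmbedsTransitively G N₁) :
    EmbedsTransitively G N₂ := by
  refine h.of_equiv e.symm.toEquiv (le_of_eq ?_)
  have hcomp : e.symm.toEquiv.permCongrHom.toMonoidHom.comp (leftReg N₂) =
      (leftReg N₁).comp e.symm.toMonoidHom := by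
    ext n x; simp [Equiv.permCongrHom]
  rw [Hol, MonoidHom.map_range, hcomp, MonoidHom.range_comp,
    (MonoidHom.range_eq_top (f := e.symm.toMonoidHom)).mpr e.symm.surjective,
    ← MonoidHom.range_eq_map]

end Transfer

section Dihedral

/-- The sign on reflections makes left multiplication by `sr i` read `x ↦ ofAdd (1, -i) * x⁻¹`
on the `C₂ × C_b` side. -/
def dihedralEquiv (b : ℕ) : DihedralGroup b ≃ Multiplicative (ZMod 2 × ZMod b) where
  toFun
    | .r i => .ofAdd (0, i)
    | .sr i => .ofAdd (1, -i)
  invFun x := if x.toAdd.1 = 0 then .r x.toAdd.2 else .sr (-x.toAdd.2)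
  left_inv := by rintro (i | i) <;> simp
  right_inv x := by
    obtain ⟨⟨s, i⟩, rfl⟩ : ∃ y, Multiplicative.ofAdd y = x := ⟨x.toAdd, rfl⟩
    obtain rfl | rfl : s = 0 ∨ s = 1 := by revert s; decide
    · simp
    · simp [show (1 : ZMod 2) ≠ 0 by decide]

variable (A : Type*) [CommGroup A] (b : ℕ)

abbrev DihedralBase : Type _ := A × Multiplicative (ZMod 2 × ZMod b)

def invSnd : MulAut (DihedralBase A b) :=
  .prodCongr (.refl A) (.inv _)

@[simp]
lemma invSnd_apply (x : DihedralBase A b) : invSnd A b x = (x.1, x.2⁻¹) := rfl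

def parity : DihedralBase A b →* Multiplicative (ZMod 2) :=
  (AddMonoidHom.fst (ZMod 2) (ZMod b)).toMultiplicative.comp (MonoidHom.snd _ _)

def twistedTranslation (x : DihedralBase A b) : Equiv.Perm (DihedralBase A b) :=
  if parity A b x = 1 then leftReg _ x else leftReg _ x * MulAut.toPerm _ (invSnd A b)

def prodDihedralEquiv : A × DihedralGroup b ≃ DihedralBase A b :=
  (Equiv.refl A).prodCongr (dihedralEquiv b)

variable {A b}

lemma permCongrHom_prodDihedralEquiv_leftReg (n : A × DihedralGroup b) :
    (prodDihedralEquiv A b).permCongrHom (leftReg _ n) =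
      twistedTranslation A b (prodDihedralEquiv A b n) := by
  refine Equiv.ext fun y => ?_
  obtain ⟨w, rfl⟩ := (prodDihedralEquiv A b).surjective y
  obtain ⟨a, i | i⟩ := n <;> obtain ⟨c, j | j⟩ := w <;>
    simp [Equiv.permCongrHom, twistedTranslation, prodDihedralEquiv, dihedralEquiv, parity,
      ← ofAdd_add, ← ofAdd_neg, sub_eq_add_neg, add_comm, show (1 : ZMod 2) + 1 = 0 by decide]

lemma coe_map_range_leftReg_prodDihedral :
    ((leftReg (A × DihedralGroup b)).range.map (prodDihedralEquiv A b).permCongrHom.toMonoidHom :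
      Set (Equiv.Perm (DihedralBase A b))) = Set.range (twistedTranslation A b) := by
  rw [MonoidHom.map_range, MonoidHom.coe_range]
  have hcomp : ⇑((prodDihedralEquiv A b).permCongrHom.toMonoidHom.comp (leftReg _)) =
      twistedTranslation A b ∘ prodDihedralEquiv A b :=
    funext permCongrHom_prodDihedralEquiv_leftReg
  rw [hcomp, (prodDihedralEquiv A b).surjective.range_comp]

variable [IsCyclic (DihedralBase A b)]

lemma parity_mulAut_apply (α : MulAut (DihedralBase A b)) (x : DihedralBase A b) :
    parity A b (α x) = parity A b x := by
  obtain ⟨m, hm⟩ := α.toMonoidHom.map_cyclic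
  replace hm : ∀ x, α x = x ^ m := hm
  -- `α` cannot kill the element `t` of order two, so `m` is odd.
  let t : DihedralBase A b := (1, .ofAdd (1, 0))
  have hodd : Odd m := by
    by_contra hm_even
    obtain ⟨k, rfl⟩ := Int.not_odd_iff_even.mp hm_even
    have ht : t ^ 2 = 1 := by
      simp [t, Prod.ext_iff, ← ofAdd_nsmul]
      decide
    apply (show t ≠ 1 by simp [t, Prod.ext_iff])
    apply α.injective
    rw [hm, map_one, ← two_mul, zpow_mul, zpow_ofNat, ht, one_zpow]
  have hsq : ∀ z : Multiplicative (ZMod 2), z ^ 2 = 1 := by decide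
  obtain ⟨k, rfl⟩ := hodd
  rw [hm, map_zpow, zpow_add_one, zpow_mul, zpow_ofNat, hsq, one_zpow, one_mul]

lemma toPerm_mul_twistedTranslation_mul_inv (α : MulAut (DihedralBase A b))
    (x : DihedralBase A b) :
    MulAut.toPerm _ α * twistedTranslation A b x * (MulAut.toPerm _ α)⁻¹ =
      twistedTranslation A b (α x) := by
  have hflip : MulAut.toPerm _ α * MulAut.toPerm _ (invSnd A b) * (MulAut.toPerm _ α)⁻¹ =
      MulAut.toPerm _ (invSnd A b) := by
    rw [← map_mul, ← map_inv, ← map_mul, (MulAut.commute_of_isCyclic α _).eq,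
      mul_inv_cancel_right]
  unfold twistedTranslation
  rw [parity_mulAut_apply]
  split_ifs
  · exact MulAut.toPerm_mul_leftReg_mul_inv α x
  · have hconj : ∀ g l i : Equiv.Perm (DihedralBase A b),
        g * (l * i) * g⁻¹ = g * l * g⁻¹ * (g * i * g⁻¹) := by intros; group
    rw [hconj, MulAut.toPerm_mul_leftReg_mul_inv, hflip]

lemma Hol_le_normalizer_map_range_leftReg_prodDihedral :
    Hol (DihedralBase A b) ≤ Subgroup.normalizer
      ((leftReg (A × DihedralGroup b)).range.map (prodDihedralEquiv A b).permCongrHom.toMonoidHom :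
        Set (Equiv.Perm (DihedralBase A b))) := by
  set K := (leftReg (A × DihedralGroup b)).range.map
    (prodDihedralEquiv A b).permCongrHom.toMonoidHom
  have hK : ∀ σ, σ ∈ K ↔ σ ∈ Set.range (twistedTranslation A b) := fun σ => by
    rw [← coe_map_range_leftReg_prodDihedral, SetLike.mem_coe]
  have hAut : (MulAut.toPerm _).range ≤ Subgroup.normalizer (K : Set (Equiv.Perm (DihedralBase A b))) := by
    rw [Subgroup.le_normalizer_iff]
    rintro _ ⟨α, rfl⟩ _ hk
    obtain ⟨x, rfl⟩ := (hK _).mp hk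
    rw [toPerm_mul_twistedTranslation_mul_inv, hK]
    exact ⟨_, rfl⟩
  have hleft : (leftReg _).range ≤ K ⊔ (MulAut.toPerm _).range := by
    rintro _ ⟨c, rfl⟩
    have hc := (hK (twistedTranslation A b c)).mpr ⟨c, rfl⟩
    by_cases hpar : parity A b c = 1
    · rw [twistedTranslation, if_pos hpar] at hc
      exact Subgroup.mem_sup_left hc
    · rw [twistedTranslation, if_neg hpar] at hc
      rw [← mul_inv_cancel_right (leftReg _ c) (MulAut.toPerm _ (invSnd A b))]
      exact Subgroup.mul_mem_sup hc (inv_mem ⟨_, rfl⟩)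
  calc Hol _ ≤ (leftReg _).range ⊔ (MulAut.toPerm _).range :=
        Hol_le_range_leftReg_sup_range_toPerm
    _ ≤ K ⊔ (MulAut.toPerm _).range := sup_le hleft le_sup_right
    _ ≤ Subgroup.normalizer (K : Set (Equiv.Perm (DihedralBase A b))) := sup_le Subgroup.le_normalizer hAut

theorem EmbedsTransitively.prod_dihedral {G : Type*} [Group G]
    (h : EmbedsTransitively G (DihedralBase A b)) : EmbedsTransitively G (A × DihedralGroup b) :=
  h.of_equiv _ Hol_le_normalizer_map_range_leftReg_prodDihedral

end Dihedral

def ZMod.addEquivProdOfCoprime {m n k : ℕ} (h : m = n * k) (hnk : n.Coprime k) :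
    ZMod m ≃+ ZMod n × ZMod k :=
  ((ZMod.ringEquivCongr h).trans (ZMod.chineseRemainder hnk)).toAddEquiv

theorem EmbedsTransitively.prod_dihedral_of_addEquiv {G B : Type*} [Group G] [AddCommGroup B]
    {n b : ℕ} (e : ZMod n ≃+ B × (ZMod 2 × ZMod b))
    (h : EmbedsTransitively G (Multiplicative (ZMod n))) :
    EmbedsTransitively G (Multiplicative B × DihedralGroup b) := by
  let e' : Multiplicative (ZMod n) ≃* DihedralBase (Multiplicative B) b :=
    e.toMultiplicative.trans (MulEquiv.prodMultiplicative _ _)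
  have : IsCyclic (DihedralBase (Multiplicative B) b) := e'.isCyclic.mp inferInstance
  exact (h.of_mulEquiv e').prod_dihedral

theorem embeds_cyclic_implies_embeds_others_general (p q : ℕ) (hp : p.Prime) (hq : q.Prime)
    (hpodd : Odd p) (hqodd : Odd q) (hlt : q < p)
    (G : Type*) [Group G]
    (h : EmbedsTransitively G (Multiplicative (ZMod (2 * p * q)))) :
    EmbedsTransitively G (Multiplicative (ZMod p) × DihedralGroup q) ∧
    EmbedsTransitively G (Multiplicative (ZMod q) × DihedralGroup p) ∧
    EmbedsTransitively G (DihedralGroup (p * q)) := by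
  have h2p : Nat.Coprime 2 p := Nat.coprime_two_left.mpr hpodd
  have h2q : Nat.Coprime 2 q := Nat.coprime_two_left.mpr hqodd
  have hpq : Nat.Coprime p q := (Nat.coprime_primes hp hq).mpr hlt.ne'
  refine ⟨h.prod_dihedral_of_addEquiv ?_, h.prod_dihedral_of_addEquiv ?_, ?_⟩
  · exact (ZMod.addEquivProdOfCoprime (by ring) (h2p.symm.mul_right hpq)).trans
      (.prodCongr (.refl _) (ZMod.addEquivProdOfCoprime rfl h2q))
  · exact (ZMod.addEquivProdOfCoprime (by ring) (h2q.symm.mul_right hpq.symm)).trans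
      (.prodCongr (.refl _) (ZMod.addEquivProdOfCoprime rfl h2p))
  · have e : ZMod (2 * p * q) ≃+ PUnit.{1} × (ZMod 2 × ZMod (p * q)) :=
      (ZMod.addEquivProdOfCoprime (mul_assoc 2 p q) (h2p.mul_right h2q)).trans
        AddEquiv.uniqueProd.symm
    exact (h.prod_dihedral_of_addEquiv e).of_mulEquiv MulEquiv.uniqueProd

theorem embeds_cyclic_implies_embeds_others (p q : ℕ) (hp : p.Prime) (hq : q.Prime)
    (hpodd : Odd p) (hqodd : Odd q) (hlt : q < p)
    (G : Type*) [Group G] [Finite G]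
    (h : EmbedsTransitively G (Multiplicative (ZMod (2 * p * q)))) :
    EmbedsTransitively G (Multiplicative (ZMod p) × DihedralGroup q) ∧
    EmbedsTransitively G (Multiplicative (ZMod q) × DihedralGroup p) ∧
    EmbedsTransitively G (DihedralGroup (p * q)) :=
  embeds_cyclic_implies_embeds_others_general p q hp hq hpodd hqodd hlt G h
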